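/- arXiv:2603.03382 — 2 statements merged into one kernel-verified Lean document; each statement's English description precedes it below -/
import Mathlib

section
/- Let f(t,s,r)=γ(t)+sX(t)+rY(t) be a pseudo-non-degenerate two-ruled frontal in ℝ⁴ (normalized, with b₄≡0), and let p be a singular point of f. Then f is a front at p if and only if the vectors X, Y, X', X'' are linearly independent at that point. -/
open scoped Topology
open Filter

noncomputable section

/-- Ambient space `ℝ⁴`. -/
abbrev E4 := Fin 4 → ℝ

/-- The standard inner product on `ℝ⁴`. -/
def dot4 (u v : E4) : ℝ := ∑ i, u i * v i

/-- `det(u,v,w,x)` for four vectors of `ℝ⁴`. -/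
def det4 (u v w x : E4) : ℝ := Matrix.det (Matrix.of ![u, v, w, x])

/-- The triple exterior (cross) product `u ∧ v ∧ w` in `ℝ⁴`. -/
def tcross (u v w : E4) : E4 := fun i => det4 (Pi.single i 1) u v w

/-- A point `p` is a singular point of `f` if `rank df_p < 3`. -/
def IsSingAt (f : ℝ × ℝ × ℝ → E4) (p : ℝ × ℝ × ℝ) : Prop :=
  Module.finrank ℝ ↥(LinearMap.range (fderiv ℝ f p).toLinearMap) < 3

lemma det4_expand (u v w x : E4) : det4 u v w x = (1 : ℝ) * (u 0 * v 1 * w 2 * x 3) + ((-1 : ℝ) * (u 0 * v 1 * w 3 * x 2) + ((-1 : ℝ) * (u 0 * v 2 * w 1 * x 3) + ((1 : ℝ) * (u 0 * v 2 * w 3 * x 1) + ((1 : ℝ) * (u 0 * v 3 * w 1 * x 2) + ((-1 : ℝ) * (u 0 * v 3 * w 2 * x 1) + ((-1 : ℝ) * (u 1 * v 0 * w 2 * x 3) + ((1 : ℝ) * (u 1 * v 0 * w 3 * x 2) + ((1 : ℝ) * (u 1 * v 2 * w 0 * x 3) + ((-1 : ℝ) * (u 1 * v 2 * w 3 * x 0)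 + ((-1 : ℝ) * (u 1 * v 3 * w 0 * x 2) + ((1 : ℝ) * (u 1 * v 3 * w 2 * x 0) + ((1 : ℝ) * (u 2 * v 0 * w 1 * x 3) + ((-1 : ℝ) * (u 2 * v 0 * w 3 * x 1) + ((-1 : ℝ) * (u 2 * v 1 * w 0 * x 3) + ((1 : ℝ) * (u 2 * v 1 * w 3 * x 0) + ((1 : ℝ) * (u 2 * v 3 * w 0 * x 1) + ((-1 : ℝ) * (u 2 * v 3 * w 1 * x 0) + ((-1 : ℝ) * (u 3 * v 0 * w 1 * x 2) + ((1 : ℝ) * (u 3 * v 0 * w 2 * x 1) + ((1 : ℝ) * (u 3 * v 1 * w 0 * x 2) + ((-1 : ℝ) * (u 3 * v 1 * w 2 * x 0) + ((-1 : ℝ) * (u 3 * v 2 * w 0 * x 1) + ((1 : ℝ) * (u 3 * v 2 * w 1 * x 0)))))))))))))))))))))))) := by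
  simp [det4, Matrix.det_succ_row_zero, Fin.sum_univ_succ, show Fin.succAbove (1:Fin 4) 2 = 3 from rfl, show Fin.succAbove (2:Fin 4) 2 = 3 from rfl, show Fin.succAbove (3:Fin 4) 2 = 2 from rfl]
  ring

lemma hasDerivAt_det4 {u v w x : ℝ → E4} {u' v' w' x' : E4} {t : ℝ}
    (hu : HasDerivAt u u' t) (hv : HasDerivAt v v' t)
    (hw : HasDerivAt w w' t) (hx : HasDerivAt x x' t) :
    HasDerivAt (fun τ => det4 (u τ) (v τ) (w τ) (x τ))
      (det4 u' (v t) (w t) (x t) + det4 (u t) v' (w t) (x t)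
        + det4 (u t) (v t) w' (x t) + det4 (u t) (v t) (w t) x') t := by
  have hu' : ∀ i, HasDerivAt (fun τ => u τ i) (u' i) t := fun i => hasDerivAt_pi.mp hu i
  have hv' : ∀ i, HasDerivAt (fun τ => v τ i) (v' i) t := fun i => hasDerivAt_pi.mp hv i
  have hw' : ∀ i, HasDerivAt (fun τ => w τ i) (w' i) t := fun i => hasDerivAt_pi.mp hw i
  have hx' : ∀ i, HasDerivAt (fun τ => x τ i) (x' i) t := fun i => hasDerivAt_pi.mp hx i
  have H := (((((hu' 0).mul (hv' 1)).mul (hw' 2)).mul (hx' 3)).const_mul ((1 : ℝ))).add ((((((hu' 0).mul (hv' 1)).mul (hw' 3)).mul (hx' 2)).const_mul ((-1 : ℝ))).add ((((((hu' 0).mul (hv' 2)).mul (hw' 1)).mul (hx' 3)).const_mul ((-1 : ℝ))).add ((((((hu' 0).mul (hv' 2)).mul (hw' 3)).mul (hx' 1)).const_mul ((1 : ℝ))).add ((((((hu' 0).mul (hv' 3)).mul (hw' 1)).mul (hx' 2)).const_mul ((1 : ℝ))).add ((((((hu' 0).mul (hv' 3)).mul (hw' 2)).mul (hx' 1)).const_mul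 ((-1 : ℝ))).add ((((((hu' 1).mul (hv' 0)).mul (hw' 2)).mul (hx' 3)).const_mul ((-1 : ℝ))).add ((((((hu' 1).mul (hv' 0)).mul (hw' 3)).mul (hx' 2)).const_mul ((1 : ℝ))).add ((((((hu' 1).mul (hv' 2)).mul (hw' 0)).mul (hx' 3)).const_mul ((1 : ℝ))).add ((((((hu' 1).mul (hv' 2)).mul (hw' 3)).mul (hx' 0)).const_mul ((-1 : ℝ))).add ((((((hu' 1).mul (hv' 3)).mul (hw' 0)).mul (hx' 2)).const_mul ((-1 : ℝ))).add ((((((hu' 1).mul (hv' 3)).mul (hw' 2)).mul (hx' 0)).const_mul ((1 : ℝ))).add ((((((hu' 2).mul (hv' 0)).mul (hw' 1)).mul (hx' 3)).const_mul ((1 : ℝ))).add ((((((hu' 2).mul (hv' 0)).mul (hw' 3)).mul (hx' 1)).const_mul ((-1 : ℝ))).add ((((((hu' 2).mul (hv' 1)).mul (hw' 0)).mul (hx' 3)).const_mul ((-1 : ℝ))).add ((((((hu' 2).mul (hv' 1)).mul (hw' 3)).mul (hx' 0)).const_mul ((1 : ℝ))).add ((((((hu' 2).mul (hv' 3)).mul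 (hw' 0)).mul (hx' 1)).const_mul ((1 : ℝ))).add ((((((hu' 2).mul (hv' 3)).mul (hw' 1)).mul (hx' 0)).const_mul ((-1 : ℝ))).add ((((((hu' 3).mul (hv' 0)).mul (hw' 1)).mul (hx' 2)).const_mul ((-1 : ℝ))).add ((((((hu' 3).mul (hv' 0)).mul (hw' 2)).mul (hx' 1)).const_mul ((1 : ℝ))).add ((((((hu' 3).mul (hv' 1)).mul (hw' 0)).mul (hx' 2)).const_mul ((1 : ℝ))).add ((((((hu' 3).mul (hv' 1)).mul (hw' 2)).mul (hx' 0)).const_mul ((-1 : ℝ))).add ((((((hu' 3).mul (hv' 2)).mul (hw' 0)).mul (hx' 1)).const_mul ((-1 : ℝ))).add (((((hu' 3).mul (hv' 2)).mul (hw' 1)).mul (hx' 0)).const_mul ((1 : ℝ)))))))))))))))))))))))))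
  have hfn : (fun τ => det4 (u τ) (v τ) (w τ) (x τ)) = (fun τ => (1 : ℝ) * (u τ 0 * v τ 1 * w τ 2 * x τ 3) + ((-1 : ℝ) * (u τ 0 * v τ 1 * w τ 3 * x τ 2) + ((-1 : ℝ) * (u τ 0 * v τ 2 * w τ 1 * x τ 3) + ((1 : ℝ) * (u τ 0 * v τ 2 * w τ 3 * x τ 1) + ((1 : ℝ) * (u τ 0 * v τ 3 * w τ 1 * x τ 2) + ((-1 : ℝ) * (u τ 0 * v τ 3 * w τ 2 * x τ 1) + ((-1 : ℝ) * (u τ 1 * v τ 0 * w τ 2 * x τ 3) + ((1 : ℝ) * (u τ 1 * v τ 0 * w τ 3 * x τ 2) + ((1 : ℝ) * (u τ 1 * v τ 2 * w τ 0 * x τ 3) + ((-1 : ℝ) * (u τ 1 * v τ 2 * w τ 3 * x τ 0) + ((-1 : ℝ) * (u τ 1 * v τ 3 * w τ 0 * x τ 2) + ((1 : ℝ) * (u τ 1 * v τ 3 * w τ 2 * x τ 0) + ((1 : ℝ) * (u τ 2 * v τ 0 * w τ 1 * x τ 3) + ((-1 : ℝ) * (u τ 2 * v τ 0 * w τ 3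 * x τ 1) + ((-1 : ℝ) * (u τ 2 * v τ 1 * w τ 0 * x τ 3) + ((1 : ℝ) * (u τ 2 * v τ 1 * w τ 3 * x τ 0) + ((1 : ℝ) * (u τ 2 * v τ 3 * w τ 0 * x τ 1) + ((-1 : ℝ) * (u τ 2 * v τ 3 * w τ 1 * x τ 0) + ((-1 : ℝ) * (u τ 3 * v τ 0 * w τ 1 * x τ 2) + ((1 : ℝ) * (u τ 3 * v τ 0 * w τ 2 * x τ 1) + ((1 : ℝ) * (u τ 3 * v τ 1 * w τ 0 * x τ 2) + ((-1 : ℝ) * (u τ 3 * v τ 1 * w τ 2 * x τ 0) + ((-1 : ℝ) * (u τ 3 * v τ 2 * w τ 0 * x τ 1) + ((1 : ℝ) * (u τ 3 * v τ 2 * w τ 1 * x τ 0))))))))))))))))))))))))) := by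
    funext τ; rw [det4_expand]
  rw [hfn]
  refine H.congr_deriv ?_
  simp only [det4_expand, Pi.mul_apply]; ring

lemma dot4_expand (u v : E4) : dot4 u v = u 0 * v 0 + u 1 * v 1 + u 2 * v 2 + u 3 * v 3 := by
  simp [dot4, Fin.sum_univ_four]

lemma hasDerivAt_dot4 {u v : ℝ → E4} {u' v' : E4} {t : ℝ}
    (hu : HasDerivAt u u' t) (hv : HasDerivAt v v' t) :
    HasDerivAt (fun τ => dot4 (u τ) (v τ)) (dot4 u' (v t) + dot4 (u t) v') t := by
  have hu' : ∀ i, HasDerivAt (fun τ => u τ i) (u' i) t := fun i => hasDerivAt_pi.mp hu i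
  have hv' : ∀ i, HasDerivAt (fun τ => v τ i) (v' i) t := fun i => hasDerivAt_pi.mp hv i
  have H := (((hu' 0).mul (hv' 0)).add ((hu' 1).mul (hv' 1))).add
    ((((hu' 2).mul (hv' 2))).add ((hu' 3).mul (hv' 3)))
  have hfn : (fun τ => dot4 (u τ) (v τ))
      = (fun τ => (u τ 0 * v τ 0 + u τ 1 * v τ 1) + (u τ 2 * v τ 2 + u τ 3 * v τ 3)) := by
    funext τ; rw [dot4_expand]; ring
  rw [hfn]
  refine H.congr_deriv ?_
  simp only [dot4_expand]; ring

lemma dot4_tcross (p u v w : E4) : dot4 p (tcross u v w) = det4 p u v w := by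
  simp [dot4_expand, tcross, det4_expand, Pi.single_apply]
  ring

lemma tcross_13 (u v : E4) : tcross u v u = 0 := by
  funext i
  fin_cases i <;> (simp [tcross, det4_expand, Pi.single_apply]; try ring)

lemma tcross_23 (u v : E4) : tcross u v v = 0 := by
  funext i
  fin_cases i <;> (simp [tcross, det4_expand, Pi.single_apply]; try ring)

lemma tcross_comb3 (u v a b c : E4) (α β δ : ℝ) :
    tcross u v (α • a + β • b + δ • c)
      = α • tcross u v a + β • tcross u v b + δ • tcross u v c := by
  funext i
  fin_cases i <;> (simp [tcross, det4_expand, Pi.single_apply, Pi.add_apply, Pi.smul_apply, smul_eq_mul]; try ring)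

lemma tcross_smul3 (u v a : E4) (α : ℝ) : tcross u v (α • a) = α • tcross u v a := by
  funext i
  fin_cases i <;> (simp [tcross, det4_expand, Pi.single_apply, Pi.smul_apply, smul_eq_mul]; try ring)

lemma hasDerivAt_tcross {u v w : ℝ → E4} {u' v' w' : E4} {t : ℝ}
    (hu : HasDerivAt u u' t) (hv : HasDerivAt v v' t) (hw : HasDerivAt w w' t) :
    HasDerivAt (fun τ => tcross (u τ) (v τ) (w τ))
      (tcross u' (v t) (w t) + tcross (u t) v' (w t) + tcross (u t) (v t) w') t := by
  rw [hasDerivAt_pi]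
  intro i
  have H := hasDerivAt_det4 (hasDerivAt_const t (Pi.single i 1)) hu hv hw
  have h0 : det4 (0 : E4) (u t) (v t) (w t) = 0 := by
    simp [det4_expand]
  refine H.congr_deriv ?_
  simp only [tcross, Pi.add_apply, h0]
  ring

lemma linIndep4_iff (u v w x : E4) :
    LinearIndependent ℝ ![u, v, w, x] ↔ det4 u v w x ≠ 0 := by
  rw [show ![u,v,w,x] = Matrix.row (Matrix.of ![u,v,w,x]) from rfl,
    Matrix.linearIndependent_rows_iff_isUnit, Matrix.isUnit_iff_isUnit_det,
    isUnit_iff_ne_zero]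
  rfl

lemma det4_cyc (u v w x : E4) : det4 w u v x = det4 u v w x := by
  simp [det4_expand]; ring

lemma det4_rot (u v w x : E4) : det4 x u v w = - det4 u v w x := by
  simp [det4_expand]; ring

lemma dot4_comm (u v : E4) : dot4 u v = dot4 v u := by simp [dot4_expand]; ring

lemma dot4_comb1 (a b c z : E4) (α β δ : ℝ) :
    dot4 (α • a + β • b + δ • c) z = α * dot4 a z + β * dot4 b z + δ * dot4 c z := by
  simp [dot4_expand]; ring

lemma dot4_comb2 (a b z : E4) (α β : ℝ) :
    dot4 (α • a + β • b) z = α * dot4 a z + β * dot4 b z := by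
  simp [dot4_expand]; ring

lemma dot4_zero_right (u : E4) : dot4 u 0 = 0 := by simp [dot4_expand]

lemma dot4_zero_left (u : E4) : dot4 0 u = 0 := by simp [dot4_expand]

lemma tcross_smul2 (u a v : E4) (α : ℝ) : tcross u (α • a) v = α • tcross u a v := by
  funext i
  fin_cases i <;> (simp [tcross, det4_expand, Pi.single_apply, Pi.smul_apply, smul_eq_mul]; try ring)

/-- A pseudo-non-degenerate two-ruled frontal (normalized, `b₄ ≡ 0`), with unit normal
`ν = X ∧ Y ∧ X'`, is a front at a singular point `p = (0,s,r)` — i.e. `(f,ν)` is an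
immersion at `p` — iff `X, Y, X', X''` are linearly independent at that point. -/
theorem stmt2 (γ X Y : ℝ → E4) (a b₁ b₂ b₃ : ℝ → ℝ)
    (hγ : ContDiff ℝ (⊤ : ℕ∞) γ) (hX : ContDiff ℝ (⊤ : ℕ∞) X) (hY : ContDiff ℝ (⊤ : ℕ∞) Y)
    (ha : ContDiff ℝ (⊤ : ℕ∞) a) (hb₁ : ContDiff ℝ (⊤ : ℕ∞) b₁) (hb₂ : ContDiff ℝ (⊤ : ℕ∞) b₂)
    (hb₃ : ContDiff ℝ (⊤ : ℕ∞) b₃)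
    -- constrictively adapted director curves
    (hXunit : ∀ᶠ t in 𝓝 (0:ℝ), dot4 (X t) (X t) = 1)
    (hYunit : ∀ᶠ t in 𝓝 (0:ℝ), dot4 (Y t) (Y t) = 1)
    (hXY : ∀ᶠ t in 𝓝 (0:ℝ), dot4 (X t) (Y t) = 0)
    (hXY' : ∀ᶠ t in 𝓝 (0:ℝ), dot4 (X t) (deriv Y t) = 0)
    -- normalization: dim span {X, Y, X'} = 3 and |X'| = 1
    (hspan : ∀ᶠ t in 𝓝 (0:ℝ), LinearIndependent ℝ ![X t, Y t, deriv X t])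
    (hX'unit : ∀ᶠ t in 𝓝 (0:ℝ), dot4 (deriv X t) (deriv X t) = 1)
    -- structure functions with b₄ ≡ 0 (two-ruled frontal)
    (hY' : ∀ᶠ t in 𝓝 (0:ℝ), deriv Y t = a t • deriv X t)
    (hγ' : ∀ᶠ t in 𝓝 (0:ℝ), deriv γ t =
      b₁ t • X t + b₂ t • Y t + b₃ t • deriv X t)
    (F : ℝ × ℝ × ℝ → E4)
    (hF : F = fun p => γ p.1 + p.2.1 • X p.1 + p.2.2 • Y p.1)
    (ν : ℝ × ℝ × ℝ → E4)
    (hν : ν = fun q => tcross (X q.1) (Y q.1) (deriv X q.1))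
    (G : ℝ × ℝ × ℝ → E4 × E4)
    (hG : G = fun q => (F q, ν q))
    (s r : ℝ)
    (hsing : IsSingAt F (0, s, r)) :
    Function.Injective (fderiv ℝ G (0, s, r)) ↔
      LinearIndependent ℝ ![X 0, Y 0, deriv X 0, deriv (deriv X) 0] := by
  -- notation
  have hXd : Differentiable ℝ X := hX.differentiable (by simp)
  have hYd : Differentiable ℝ Y := hY.differentiable (by simp)
  have hγd : Differentiable ℝ γ := hγ.differentiable (by simp)
  have hX'c := (contDiff_infty_iff_deriv.mp (hX.of_le (by simp))).2
  have hX'd : Differentiable ℝ (deriv X) := hX'c.differentiable (by simp)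
  set x := X 0 with hx_def
  set y := Y 0 with hy_def
  set x1 := deriv X 0 with hx1_def
  set x2 := deriv (deriv X) 0 with hx2_def
  set y' := deriv Y 0 with hy'_def
  set g' := deriv γ 0 with hg'_def
  have HX : HasDerivAt X x1 0 := (hXd 0).hasDerivAt
  have HY : HasDerivAt Y y' 0 := (hYd 0).hasDerivAt
  have HX' : HasDerivAt (deriv X) x2 0 := (hX'd 0).hasDerivAt
  have Hγ : HasDerivAt γ g' 0 := (hγd 0).hasDerivAt
  -- pointwise facts at 0
  have hXunit0 : dot4 x x = 1 := hXunit.self_of_nhds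
  have hYunit0 : dot4 y y = 1 := hYunit.self_of_nhds
  have hXY0 : dot4 x y = 0 := hXY.self_of_nhds
  have hXY'0 : dot4 x y' = 0 := hXY'.self_of_nhds
  have hX'unit0 : dot4 x1 x1 = 1 := hX'unit.self_of_nhds
  have hY'0 : y' = a 0 • x1 := hY'.self_of_nhds
  have hγ'0 : g' = b₁ 0 • x + b₂ 0 • y + b₃ 0 • x1 := hγ'.self_of_nhds
  have hspan0 : LinearIndependent ℝ ![x, y, x1] := hspan.self_of_nhds
  -- derivatives of the adapted relations
  have hxx1 : dot4 x x1 = 0 := by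
    have h := (hasDerivAt_dot4 HX HX).deriv
    have he : deriv (fun τ => dot4 (X τ) (X τ)) 0 = deriv (fun _ : ℝ => (1:ℝ)) 0 :=
      Filter.EventuallyEq.deriv_eq hXunit
    rw [he, deriv_const] at h
    have hc : dot4 x1 x = dot4 x x1 := dot4_comm _ _
    linarith [h, hc]
  have hyx1 : dot4 y x1 = 0 := by
    have h := (hasDerivAt_dot4 HX HY).deriv
    have he : deriv (fun τ => dot4 (X τ) (Y τ)) 0 = deriv (fun _ : ℝ => (0:ℝ)) 0 :=
      Filter.EventuallyEq.deriv_eq hXY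
    rw [he, deriv_const] at h
    have hc : dot4 x1 y = dot4 y x1 := dot4_comm _ _
    linarith [h, hc]
  have hx2x1 : dot4 x2 x1 = 0 := by
    have h := (hasDerivAt_dot4 HX' HX').deriv
    have he : deriv (fun τ => dot4 (deriv X τ) (deriv X τ)) 0 = deriv (fun _ : ℝ => (1:ℝ)) 0 :=
      Filter.EventuallyEq.deriv_eq hX'unit
    rw [he, deriv_const] at h
    have hc : dot4 x1 x2 = dot4 x2 x1 := dot4_comm _ _
    linarith [h, hc]
  -- the derivative of the normal curve
  set D := tcross x y x2 with hD_def
  have Hνc : HasDerivAt (fun t => tcross (X t) (Y t) (deriv X t)) D 0 := by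
    have h := hasDerivAt_tcross HX HY HX'
    have : tcross x1 y x1 + tcross x y' x1 + tcross x y x2 = D := by
      rw [hY'0, tcross_13, tcross_smul2, tcross_23, hD_def]
      simp
    rwa [this] at h
  -- continuous linear maps
  set p : ℝ × ℝ × ℝ := ((0:ℝ), s, r) with hp_def
  set l1 : ℝ × ℝ × ℝ →L[ℝ] ℝ := ContinuousLinearMap.fst ℝ ℝ (ℝ × ℝ) with hl1_def
  set l2 : ℝ × ℝ × ℝ →L[ℝ] ℝ :=
    (ContinuousLinearMap.fst ℝ ℝ ℝ).comp (ContinuousLinearMap.snd ℝ ℝ (ℝ × ℝ)) with hl2_def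
  set l3 : ℝ × ℝ × ℝ →L[ℝ] ℝ :=
    (ContinuousLinearMap.snd ℝ ℝ ℝ).comp (ContinuousLinearMap.snd ℝ ℝ (ℝ × ℝ)) with hl3_def
  have hA : HasFDerivAt (fun q : ℝ × ℝ × ℝ => γ q.1)
      (((1 : ℝ →L[ℝ] ℝ).smulRight g').comp l1) p :=
    (Hγ.hasFDerivAt).comp p (l1.hasFDerivAt)
  have hXq : HasFDerivAt (fun q : ℝ × ℝ × ℝ => X q.1)
      (((1 : ℝ →L[ℝ] ℝ).smulRight x1).comp l1) p :=
    (HX.hasFDerivAt).comp p (l1.hasFDerivAt)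
  have hYq : HasFDerivAt (fun q : ℝ × ℝ × ℝ => Y q.1)
      (((1 : ℝ →L[ℝ] ℝ).smulRight y').comp l1) p :=
    (HY.hasFDerivAt).comp p (l1.hasFDerivAt)
  have hB : HasFDerivAt (fun q : ℝ × ℝ × ℝ => q.2.1 • X q.1)
      (s • (((1 : ℝ →L[ℝ] ℝ).smulRight x1).comp l1) + l2.smulRight x) p :=
    (l2.hasFDerivAt).smul hXq
  have hC : HasFDerivAt (fun q : ℝ × ℝ × ℝ => q.2.2 • Y q.1)
      (r • (((1 : ℝ →L[ℝ] ℝ).smulRight y').comp l1) + l3.smulRight y) p :=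
    (l3.hasFDerivAt).smul hYq
  set LF : ℝ × ℝ × ℝ →L[ℝ] E4 :=
    ((1 : ℝ →L[ℝ] ℝ).smulRight g').comp l1
      + (s • (((1 : ℝ →L[ℝ] ℝ).smulRight x1).comp l1) + l2.smulRight x)
      + (r • (((1 : ℝ →L[ℝ] ℝ).smulRight y').comp l1) + l3.smulRight y) with hLF_def
  have HF : HasFDerivAt F LF p := by
    rw [hF]
    exact (hA.add hB).add hC
  set Ft : E4 := g' + s • x1 + r • y' with hFt_def
  have hLFval : ∀ z : ℝ × ℝ × ℝ, LF z = z.1 • Ft + z.2.1 • x + z.2.2 • y := by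
    intro z
    simp only [hLF_def, hFt_def, hl1_def, hl2_def, hl3_def,
      ContinuousLinearMap.add_apply, ContinuousLinearMap.coe_comp',
      Function.comp_apply, ContinuousLinearMap.smulRight_apply,
      ContinuousLinearMap.coe_fst', ContinuousLinearMap.coe_snd',
      ContinuousLinearMap.one_apply, ContinuousLinearMap.smul_apply]
    module
  set Lν : ℝ × ℝ × ℝ →L[ℝ] E4 := ((1 : ℝ →L[ℝ] ℝ).smulRight D).comp l1 with hLν_def
  have Hν : HasFDerivAt ν Lν p := by
    rw [hν]
    exact (Hνc.hasFDerivAt).comp p (l1.hasFDerivAt)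
  have hLνval : ∀ z : ℝ × ℝ × ℝ, Lν z = z.1 • D := by
    intro z
    simp [hLν_def, hl1_def]
  have HG : HasFDerivAt G (LF.prod Lν) p := by
    rw [hG]
    exact HF.prodMk Hν
  -- singularity gives c = 0
  set c : ℝ := b₃ 0 + s + r * a 0 with hc_def
  have hFt : Ft = b₁ 0 • x + b₂ 0 • y + c • x1 := by
    rw [hFt_def, hγ'0, hY'0, hc_def]
    module
  have hc0 : c = 0 := by
    by_contra hcne
    have hrange : ∀ v : E4, v ∈ Set.range ![x, y, x1] →
        v ∈ LinearMap.range (fderiv ℝ F p).toLinearMap := by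
      have hfd : fderiv ℝ F p = LF := HF.fderiv
      have hxmem : x ∈ LinearMap.range (fderiv ℝ F p).toLinearMap := by
        refine ⟨((0:ℝ), (1:ℝ), (0:ℝ)), ?_⟩
        simp [hfd, hLFval]
      have hymem : y ∈ LinearMap.range (fderiv ℝ F p).toLinearMap := by
        refine ⟨((0:ℝ), (0:ℝ), (1:ℝ)), ?_⟩
        simp [hfd, hLFval]
      have hFtmem : Ft ∈ LinearMap.range (fderiv ℝ F p).toLinearMap := by
        refine ⟨((1:ℝ), (0:ℝ), (0:ℝ)), ?_⟩
        simp [hfd, hLFval]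
      have hcx1 : c • x1 = Ft - b₁ 0 • x - b₂ 0 • y := by rw [hFt]; module
      have hx1mem : x1 ∈ LinearMap.range (fderiv ℝ F p).toLinearMap := by
        have hmem : Ft - b₁ 0 • x - b₂ 0 • y ∈
            LinearMap.range (fderiv ℝ F p).toLinearMap :=
          Submodule.sub_mem _ (Submodule.sub_mem _ hFtmem
            (Submodule.smul_mem _ _ hxmem)) (Submodule.smul_mem _ _ hymem)
        have : x1 = c⁻¹ • (Ft - b₁ 0 • x - b₂ 0 • y) := by
          rw [← hcx1, inv_smul_smul₀ hcne]
        rw [this]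
        exact Submodule.smul_mem _ _ hmem
      rintro v ⟨i, rfl⟩
      fin_cases i
      · exact hxmem
      · exact hymem
      · exact hx1mem
    have hle : Submodule.span ℝ (Set.range ![x, y, x1]) ≤
        LinearMap.range (fderiv ℝ F p).toLinearMap :=
      Submodule.span_le.mpr hrange
    have h3 : Module.finrank ℝ (Submodule.span ℝ (Set.range ![x, y, x1])) = 3 := by
      rw [finrank_span_eq_card hspan0]
      simp
    have hmono := Submodule.finrank_mono hle
    have hlt : Module.finrank ℝ
        (LinearMap.range (fderiv ℝ F p).toLinearMap) < 3 := hsing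
    omega
  -- now the equivalence
  have hGd : fderiv ℝ G (0, s, r) = LF.prod Lν := HG.fderiv
  rw [hGd, linIndep4_iff]
  have hLG : ∀ z : ℝ × ℝ × ℝ, (LF.prod Lν) z
      = (z.1 • Ft + z.2.1 • x + z.2.2 • y, z.1 • D) := by
    intro z
    rw [ContinuousLinearMap.prod_apply, hLFval, hLνval]
  constructor
  · intro hinj
    by_contra hdet
    -- x2 lies in the span of x, y, x1 with no x1 component, hence D = 0
    have hns : ¬ LinearIndependent ℝ ![x2, x, y, x1] := by
      rw [linIndep4_iff, det4_rot, hdet]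
      simp
    have hcons : ¬ (LinearIndependent ℝ ![x, y, x1]
        ∧ x2 ∉ Submodule.span ℝ (Set.range ![x, y, x1])) := by
      rw [← linearIndependent_fin_cons]
      exact hns
    have hx2mem : x2 ∈ Submodule.span ℝ (Set.range ![x, y, x1]) := by
      by_contra hnot
      exact hcons ⟨hspan0, hnot⟩
    obtain ⟨co, hco⟩ := Submodule.mem_span_range_iff_exists_fun ℝ |>.mp hx2mem
    have hco' : co 0 • x + co 1 • y + co 2 • x1 = x2 := by
      rw [← hco, Fin.sum_univ_three]
      simp
    have hδ : co 2 = 0 := by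
      have h := hx2x1
      rw [← hco', dot4_comb1, hxx1, hyx1, hX'unit0] at h
      linarith
    have hDzero : D = 0 := by
      rw [hD_def, ← hco', hδ, tcross_comb3, tcross_13, tcross_23]
      simp
    have h1 : (LF.prod Lν) ((1:ℝ), -b₁ 0, -b₂ 0) = (LF.prod Lν) (0, 0, 0) := by
      rw [hLG, hLG]
      rw [hFt, hc0, hDzero]
      simp only [Prod.mk.injEq]
      constructor
      · module
      · module
    have := hinj h1
    have h10 : (1:ℝ) = 0 := congrArg Prod.fst this
    exact one_ne_zero h10
  · intro hdet
    have hdot : dot4 x1 D = det4 x y x1 x2 := by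
      rw [hD_def, dot4_tcross, det4_cyc]
    have hDne : D ≠ 0 := by
      intro h0
      rw [h0, dot4_zero_right] at hdot
      exact hdet hdot.symm
    intro z1 z2 hz
    rw [hLG, hLG, Prod.mk.injEq] at hz
    obtain ⟨hfst, hsnd⟩ := hz
    have hz1 : z1.1 = z2.1 := by
      have : (z1.1 - z2.1) • D = 0 := by rw [sub_smul, hsnd, sub_self]
      rcases smul_eq_zero.mp this with h | h
      · linarith [sub_eq_zero.mp (by linarith [h] : z1.1 - z2.1 = 0)]
      · exact absurd h hDne
    have hcomb : (z1.2.1 - z2.2.1) • x + (z1.2.2 - z2.2.2) • y = 0 := by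
      rw [hz1] at hfst
      linear_combination (norm := module) hfst
    have he1 : z1.2.1 - z2.2.1 = 0 := by
      have h := congrArg (fun v => dot4 v x) hcomb
      simp only [dot4_comb2, dot4_zero_left] at h
      rw [hXunit0, dot4_comm y x, hXY0] at h
      linarith
    have he2 : z1.2.2 - z2.2.2 = 0 := by
      have h := congrArg (fun v => dot4 v y) hcomb
      simp only [dot4_comb2, dot4_zero_left] at h
      rw [hYunit0, hXY0] at h
      linarith
    exact Prod.ext hz1 (Prod.ext (sub_eq_zero.mp he1) (sub_eq_zero.mp he2))
end
end

section
/- Let f(t,s,r)=γ(t)+sX(t)+rY(t) be a pseudo-non-degenerate two-ruled hypersurface in ℝ⁴, normalized so that X,Y are constrictively adapted, |X'|=1, and Y'=aX'. Set b₃(t)=⟨γ'(t),X'(t)⟩ and s(t,r)=−a(t)r−b₃(t). Then for every smooth function k(t), the curve σ(t)=γ(t)+s(t,k(t))X(t)+k(t)Y(t) satisfies ⟨σ'(t),X'(t)⟩=0 and ⟨σ'(t),Y'(t)⟩=0 for all t near 0; hence σ̃(t,k)=γ(t)+s(t,k)X(t)+kY(t) is a striction surface of f. -/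
open scoped Topology
open Filter

noncomputable section

lemma dot4_add_left (u v w : E4) : dot4 (u + v) w = dot4 u w + dot4 v w := by
  simp [dot4, add_mul, Finset.sum_add_distrib]

lemma dot4_smul_left (c : ℝ) (u v : E4) : dot4 (c • u) v = c * dot4 u v := by
  simp [dot4, Finset.mul_sum, mul_assoc]

lemma hasDerivAt_dot4_s5 {f g : ℝ → E4} {f' g' : E4} {t : ℝ}
    (hf : HasDerivAt f f' t) (hg : HasDerivAt g g' t) :
    HasDerivAt (fun τ => dot4 (f τ) (g τ)) (dot4 f' (g t) + dot4 (f t) g') t := by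
  have h : ∀ i ∈ (Finset.univ : Finset (Fin 4)),
      HasDerivAt (fun τ => f τ i * g τ i) (f' i * g t i + f t i * g' i) t :=
    fun i _ => (hasDerivAt_pi.mp hf i).mul (hasDerivAt_pi.mp hg i)
  simpa [dot4, Finset.sum_add_distrib] using HasDerivAt.fun_sum h

/-- For a pseudo-non-degenerate two-ruled hypersurface in `ℝ⁴` (normalized: constrictively
adapted, `|X'| = 1`, `Y' = aX'`), with `b₃ = ⟨γ',X'⟩` and `s(t,r) = −a(t)r − b₃(t)`,
every curve `σ(t) = γ(t) + s(t,k(t))X(t) + k(t)Y(t)` (for smooth `k`) satisfies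
`⟨σ',X'⟩ = ⟨σ',Y'⟩ = 0` near `0`; hence `σ̃(t,k) = γ(t)+s(t,k)X(t)+kY(t)` is a
striction surface of `f`. -/
theorem stmt5 (γ X Y : ℝ → E4) (a : ℝ → ℝ)
    (hγ : ContDiff ℝ (⊤ : ℕ∞) γ) (hX : ContDiff ℝ (⊤ : ℕ∞) X) (hY : ContDiff ℝ (⊤ : ℕ∞) Y)
    (ha : ContDiff ℝ (⊤ : ℕ∞) a)
    -- constrictively adapted director curves
    (hXunit : ∀ᶠ t in 𝓝 (0:ℝ), dot4 (X t) (X t) = 1)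
    (hYunit : ∀ᶠ t in 𝓝 (0:ℝ), dot4 (Y t) (Y t) = 1)
    (hXY : ∀ᶠ t in 𝓝 (0:ℝ), dot4 (X t) (Y t) = 0)
    (hXY' : ∀ᶠ t in 𝓝 (0:ℝ), dot4 (X t) (deriv Y t) = 0)
    -- normalization
    (hspan : ∀ᶠ t in 𝓝 (0:ℝ), LinearIndependent ℝ ![X t, Y t, deriv X t])
    (hX'unit : ∀ᶠ t in 𝓝 (0:ℝ), dot4 (deriv X t) (deriv X t) = 1)
    (hY' : ∀ᶠ t in 𝓝 (0:ℝ), deriv Y t = a t • deriv X t)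
    (b₃ : ℝ → ℝ) (hb₃ : b₃ = fun t => dot4 (deriv γ t) (deriv X t)) :
    ∀ k : ℝ → ℝ, ContDiff ℝ (⊤ : ℕ∞) k →
      ∀ᶠ t in 𝓝 (0:ℝ),
        dot4 (deriv (fun τ => γ τ + (-(a τ) * k τ - b₃ τ) • X τ + k τ • Y τ) t)
          (deriv X t) = 0 ∧
        dot4 (deriv (fun τ => γ τ + (-(a τ) * k τ - b₃ τ) • X τ + k τ • Y τ) t)
          (deriv Y t) = 0 := by
  intro k hk
  have hev := hXunit.and (hXY.and (hXY'.and (hX'unit.and hY')))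
  rw [eventually_nhds_iff] at hev
  obtain ⟨U, hU, hUo, hU0⟩ := hev
  -- differentiability facts
  have hγd : Differentiable ℝ γ := hγ.differentiable (by simp)
  have hXd : Differentiable ℝ X := hX.differentiable (by simp)
  have hYd : Differentiable ℝ Y := hY.differentiable (by simp)
  have had : Differentiable ℝ a := ha.differentiable (by simp)
  have hkd : Differentiable ℝ k := hk.differentiable (by simp)
  have hγ'd : Differentiable ℝ (deriv γ) :=
    ((contDiff_infty_iff_deriv.mp (hγ.of_le (by simp))).2).differentiable (by simp)
  have hX'd : Differentiable ℝ (deriv X) :=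
    ((contDiff_infty_iff_deriv.mp (hX.of_le (by simp))).2).differentiable (by simp)
  have hb₃d : Differentiable ℝ b₃ := by
    rw [hb₃]
    exact fun τ =>
      (hasDerivAt_dot4_s5 ((hγ'd τ).hasDerivAt) ((hX'd τ).hasDerivAt)).differentiableAt
  have hsd : Differentiable ℝ (fun τ => -(a τ) * k τ - b₃ τ) :=
    ((had.neg.mul hkd).sub hb₃d)
  refine Filter.eventually_of_mem (hUo.mem_nhds hU0) ?_
  intro t ht
  obtain ⟨h1, h2, h3, h4, h5⟩ := hU t ht
  -- derivative of σ
  have hσ : HasDerivAt (fun τ => γ τ + (-(a τ) * k τ - b₃ τ) • X τ + k τ • Y τ)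
      (deriv γ t
        + ((-(a t) * k t - b₃ t) • deriv X t
            + deriv (fun τ => -(a τ) * k τ - b₃ τ) t • X t)
        + (k t • deriv Y t + deriv k t • Y t)) t :=
    (((hγd t).hasDerivAt).add
      (((hsd t).hasDerivAt).smul ((hXd t).hasDerivAt))).add
      (((hkd t).hasDerivAt).smul ((hYd t).hasDerivAt))
  -- ⟨X, X'⟩ = 0
  have hXX' : dot4 (X t) (deriv X t) = 0 := by
    have hd : HasDerivAt (fun τ => dot4 (X τ) (X τ))
        (dot4 (deriv X t) (X t) + dot4 (X t) (deriv X t)) t :=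
      hasDerivAt_dot4_s5 ((hXd t).hasDerivAt) ((hXd t).hasDerivAt)
    have heq : (fun _ : ℝ => (1:ℝ)) =ᶠ[𝓝 t] fun τ => dot4 (X τ) (X τ) :=
      Filter.eventually_of_mem (hUo.mem_nhds ht) (fun τ hτ => ((hU τ hτ).1).symm)
    have h0 : dot4 (deriv X t) (X t) + dot4 (X t) (deriv X t) = 0 :=
      (hd.congr_of_eventuallyEq heq).unique (hasDerivAt_const t 1)
    have hc := dot4_comm (deriv X t) (X t)
    linarith
  -- ⟨Y, X'⟩ = 0
  have hYX' : dot4 (Y t) (deriv X t) = 0 := by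
    have hd : HasDerivAt (fun τ => dot4 (X τ) (Y τ))
        (dot4 (deriv X t) (Y t) + dot4 (X t) (deriv Y t)) t :=
      hasDerivAt_dot4_s5 ((hXd t).hasDerivAt) ((hYd t).hasDerivAt)
    have heq : (fun _ : ℝ => (0:ℝ)) =ᶠ[𝓝 t] fun τ => dot4 (X τ) (Y τ) :=
      Filter.eventually_of_mem (hUo.mem_nhds ht) (fun τ hτ => ((hU τ hτ).2.1).symm)
    have h0 : dot4 (deriv X t) (Y t) + dot4 (X t) (deriv Y t) = 0 :=
      (hd.congr_of_eventuallyEq heq).unique (hasDerivAt_const t 0)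
    have hc := dot4_comm (deriv X t) (Y t)
    linarith
  have hb₃t : dot4 (deriv γ t) (deriv X t) = b₃ t := by rw [hb₃]
  have key : dot4 (deriv (fun τ => γ τ + (-(a τ) * k τ - b₃ τ) • X τ + k τ • Y τ) t)
      (deriv X t) = 0 := by
    rw [hσ.deriv]
    simp only [dot4_add_left, dot4_smul_left, h5, hXX', hYX', h4, hb₃t]
    ring
  refine ⟨key, ?_⟩
  rw [h5, dot4_comm, dot4_smul_left, dot4_comm, key, mul_zero]
end
end
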